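/- arXiv:2504.08955 — 6 statements merged into one kernel-verified Lean document; each statement's English description precedes it below -/
import Mathlib

section
/- Let φ be a measure-preserving flow on a probability space (X, μ) that is ergodic, and let s ∈ ℝ. Then the product flow Φ^s on (X × (ℝ/ℤ), μ ⊗ Lebesgue) is ergodic if and only if for every nonzero integer n, the number ns is not a measurable eigenvalue of φ. -/
open MeasureTheory Filter

instance : Fact ((0 : ℝ) < 1) := ⟨one_pos⟩

/-- A flow is ergodic if every measurable set that is invariant (up to null sets)
under every time-`t` map has measure `0` or `1`. -/
def FlowErgodic {X : Type*} [MeasurableSpace X] (μ : Measure X) (φ : ℝ → X → X) : Prop :=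
  ∀ A : Set X, MeasurableSet A → (∀ t : ℝ, φ t ⁻¹' A =ᵐ[μ] A) → μ A = 0 ∨ μ A = 1

/-- `κ` is a measurable eigenvalue of the flow `φ`. -/
def IsMeasEigenvalue {X : Type*} [MeasurableSpace X] (μ : Measure X) (φ : ℝ → X → X)
    (κ : ℝ) : Prop :=
  ∃ f : X → ℂ, Measurable f ∧ ¬ (f =ᵐ[μ] fun _ => (0 : ℂ)) ∧
    ∀ t : ℝ, ∀ᵐ x ∂μ,
      f (φ t x) = Complex.exp (((2 * Real.pi * κ * t : ℝ) : ℂ) * Complex.I) * f x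

/-!
Write `e_n(r) = exp(2πinr)`. If `f` is an eigenfunction of `φ` with eigenvalue `ns`, then
`(x, r) ↦ f(x) e_{-n}(r)` is `Φ^s`-invariant, so its positivity set is an invariant set; it is
neither null nor conull, since on every slice `{x} × circle` with `f x ≠ 0` it is a nonempty
open set. Conversely, for a `Φ^s`-invariant set `A`, the `n`-th Fourier coefficient of the slice
indicator `r ↦ 1_A(x, r)` is an eigenfunction of `φ` with eigenvalue `-ns`. If these all vanish
for `n ≠ 0`, almost every slice of `A` is null or conull, so `A` agrees up to a null set with
`B × circle`, where `B = {x | the slice of A at x is conull}` is `φ`-invariant because Haar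
measure is translation invariant.
-/

open AddCircle Complex

section Circle

variable {T : ℝ}

lemma fourier_apply_add (n : ℤ) (x y : AddCircle T) :
    fourier n (x + y) = fourier n x * fourier n y := by
  simp_rw [fourier_apply, smul_add, AddCircle.toCircle_add, Circle.coe_mul]

variable [Fact (0 < T)]

lemma fourierCoeff_eq_fourier_mul_of_ae_eq_comp_add_right {f g : AddCircle T → ℂ}
    {a : AddCircle T} (h : ∀ᵐ r ∂haarAddCircle, f (r + a) = g r) (n : ℤ) :
    fourierCoeff f n = fourier (-n) a * fourierCoeff g n := by
  calc fourierCoeff f n = ∫ r, fourier (-n) (r + a) • f (r + a) ∂haarAddCircle :=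
        (integral_add_right_eq_self (fun r => fourier (-n) r • f r) a).symm
    _ = ∫ r, fourier (-n) a * (fourier (-n) r • g r) ∂haarAddCircle :=
        integral_congr_ae <| h.mono fun r hr => by
          dsimp only
          rw [hr, fourier_apply_add, smul_eq_mul, smul_eq_mul]; ring
    _ = fourier (-n) a * fourierCoeff g n := integral_const_mul _ _

lemma ae_eq_fourierCoeff_zero_of_fourierCoeff_eq_zero {g : AddCircle T → ℂ}
    (hg : MemLp g 2 haarAddCircle) (h : ∀ n ≠ 0, fourierCoeff g n = 0) :
    g =ᵐ[haarAddCircle] fun _ => fourierCoeff g 0 := by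
  classical
  have hLp : hg.toLp g = fourierCoeff g 0 • fourierBasis (T := T) 0 := by
    refine fourierBasis.repr.injective (lp.ext_iff.2 <| funext fun n => ?_)
    rw [map_smul, HilbertBasis.repr_self, fourierBasis_repr, fourierCoeff_congr_ae hg.coeFn_toLp]
    rcases eq_or_ne n 0 with rfl | hn
    · simp
    · simp [h n hn, hn]
  filter_upwards [hg.coeFn_toLp, Lp.coeFn_smul (fourierCoeff g 0) (fourierBasis (T := T) 0),
    coeFn_fourierLp (T := T) 2 0] with r hg_r hsmul hfourier
  rw [← hg_r, hLp, hsmul, Pi.smul_apply, coe_fourierBasis, hfourier, fourier_zero, smul_eq_mul,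
    mul_one]

lemma measure_eq_zero_or_one_of_fourierCoeff_indicator_eq_zero {S : Set (AddCircle T)}
    (hS : MeasurableSet S) (h : ∀ n ≠ 0, fourierCoeff (S.indicator (1 : AddCircle T → ℂ)) n = 0) :
    haarAddCircle S = 0 ∨ haarAddCircle S = 1 := by
  have hmem : MemLp (S.indicator (1 : AddCircle T → ℂ)) 2 haarAddCircle :=
    memLp_indicator_const 2 hS (1 : ℂ) (Or.inr (measure_ne_top _ _))
  have hconst : EventuallyConst S (ae haarAddCircle) := by
    have := (eventuallyConst_iff_exists_eventuallyEq.2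
      ⟨_, ae_eq_fourierCoeff_zero_of_fourierCoeff_eq_zero hmem h⟩).comp (· = (1 : ℂ))
    have hind : ((· = (1 : ℂ)) ∘ S.indicator (1 : AddCircle T → ℂ)) = (· ∈ S) := by
      funext r
      by_cases hr : r ∈ S <;> simp [hr]
    rwa [hind] at this
  rcases eventuallyConst_set'.1 hconst with hnull | hconull
  · exact Or.inl (ae_eq_empty.1 hnull)
  · exact Or.inr (by rw [measure_congr hconull, measure_univ])

lemma measure_pos_re_mul_fourier_pos {m : ℤ} (hm : m ≠ 0) {c : ℂ} (hc : c ≠ 0) :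
    0 < haarAddCircle {r : AddCircle T | 0 < (c * fourier m r).re} := by
  have hopen : IsOpen {r : AddCircle T | 0 < (c * fourier m r).re} :=
    isOpen_lt continuous_const (continuous_re.comp (continuous_const.mul (fourier m).continuous))
  -- at this point `fourier m` rotates `c` onto the positive real axis
  refine hopen.measure_pos _ ⟨(-arg c * T / (2 * Real.pi * m) : ℝ), ?_⟩
  have hT : (T : ℂ) ≠ 0 := ofReal_ne_zero.2 (Fact.out : 0 < T).ne'
  have hrot : fourier m ((-arg c * T / (2 * Real.pi * m) : ℝ) : AddCircle T)
      = exp ((-arg c : ℝ) * I) := by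
    rw [fourier_coe_apply]
    congr 1
    push_cast
    field_simp
  have hnorm : c * exp ((-arg c : ℝ) * I) = ‖c‖ := by
    nth_rw 1 [← norm_mul_exp_arg_mul_I c]
    rw [mul_assoc, ← exp_add, ofReal_neg, neg_mul, add_neg_cancel, exp_zero, mul_one]
  show 0 < (c * _).re
  rw [hrot, hnorm]
  simpa using hc

end Circle

section Product

variable {X : Type*} [MeasurableSpace X] {μ : Measure X} {T : ℝ}

lemma measurableSet_pos_re_mul_fourier {g : X → ℂ} (hg : Measurable g) (m : ℤ) :
    MeasurableSet {p : X × AddCircle T | 0 < (g p.1 * fourier m p.2).re} :=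
  measurableSet_lt measurable_const <| measurable_re.comp <|
    (hg.comp measurable_fst).mul ((fourier m).continuous.measurable.comp measurable_snd)

variable [Fact (0 < T)]

lemma ae_eq_zero_of_measure_pos_re_mul_fourier_eq_zero {g : X → ℂ} (hg : Measurable g) {m : ℤ}
    (hm : m ≠ 0)
    (h : μ.prod haarAddCircle {p : X × AddCircle T | 0 < (g p.1 * fourier m p.2).re} = 0) :
    g =ᵐ[μ] 0 := by
  have hmeas := measurableSet_pos_re_mul_fourier (T := T) hg m
  rw [Measure.prod_apply hmeas, lintegral_eq_zero_iff (measurable_measure_prodMk_left hmeas)] at h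
  filter_upwards [h] with x hx
  by_contra hgx
  exact (measure_pos_re_mul_fourier_pos hm hgx).ne' hx

lemma measurable_fourierCoeff_slice {g : X × AddCircle T → ℂ} (hg : Measurable g) (n : ℤ) :
    Measurable fun x => fourierCoeff (fun r => g (x, r)) n := by
  have hint : StronglyMeasurable fun p : X × AddCircle T => fourier (-n) p.2 • g p :=
    (((fourier (-n)).continuous.measurable.comp measurable_snd).smul hg).stronglyMeasurable
  exact (hint.integral_prod_right' (ν := haarAddCircle)).measurable

lemma ae_fourierCoeff_slice_eq_fourier_mul {g : X × AddCircle T → ℂ} {ψ : X → X}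
    {a : AddCircle T} (h : ∀ᵐ p ∂μ.prod haarAddCircle, g (ψ p.1, p.2 + a) = g p) (n : ℤ) :
    ∀ᵐ x ∂μ, fourierCoeff (fun r => g (ψ x, r)) n
      = fourier (-n) a * fourierCoeff (fun r => g (x, r)) n := by
  filter_upwards [Measure.ae_ae_of_ae_prod h] with x hx
  exact fourierCoeff_eq_fourier_mul_of_ae_eq_comp_add_right
    (f := fun r => g (ψ x, r)) (g := fun r => g (x, r)) hx n

lemma ae_measure_slice_eq_of_preimage_ae_eq {A : Set (X × AddCircle T)} {ψ : X → X}
    {a : AddCircle T} (h : (fun p => (ψ p.1, p.2 + a)) ⁻¹' A =ᵐ[μ.prod haarAddCircle] A) :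
    ∀ᵐ x ∂μ, haarAddCircle (Prod.mk (ψ x) ⁻¹' A) = haarAddCircle (Prod.mk x ⁻¹' A) := by
  filter_upwards [Measure.ae_ae_of_ae_prod h] with x hx
  rw [← measure_preimage_add_right _ a]
  exact measure_congr hx

end Product

lemma fourier_coe_mul_eq_exp (n : ℤ) (s t : ℝ) :
    fourier n ((s * t : ℝ) : AddCircle (1 : ℝ))
      = exp (((2 * Real.pi * (n * s) * t : ℝ) : ℂ) * I) := by
  rw [fourier_coe_apply]
  congr 1
  push_cast
  ring

def productFlow {X : Type*} (φ : ℝ → X → X) (s t : ℝ) (p : X × AddCircle (1 : ℝ)) :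
    X × AddCircle (1 : ℝ) :=
  (φ t p.1, p.2 + ((s * t : ℝ) : AddCircle (1 : ℝ)))

section Flow

variable {X : Type*} [MeasurableSpace X] {μ : Measure X} {φ : ℝ → X → X} {s : ℝ}

theorem not_isMeasEigenvalue_of_flowErgodic_productFlow [IsProbabilityMeasure μ]
    (h : FlowErgodic (μ.prod haarAddCircle) (productFlow φ s)) {n : ℤ} (hn : n ≠ 0) :
    ¬ IsMeasEigenvalue μ φ (n * s) := by
  rintro ⟨f, hf, hf0, hfeig⟩
  have hinv : ∀ t, ∀ᵐ p ∂μ.prod haarAddCircle,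
      f (φ t p.1) * fourier (-n) (p.2 + ((s * t : ℝ) : AddCircle (1 : ℝ)))
        = f p.1 * fourier (-n) p.2 := fun t => by
    filter_upwards [Measure.quasiMeasurePreserving_fst.ae (hfeig t)] with p hp
    have hcancel : exp (((2 * Real.pi * (n * s) * t : ℝ) : ℂ) * I)
        * exp (((2 * Real.pi * ((-n : ℤ) * s) * t : ℝ) : ℂ) * I) = 1 := by
      rw [← exp_add, ← exp_zero]
      congr 1
      push_cast
      ring
    rw [hp, fourier_apply_add, fourier_coe_mul_eq_exp]
    linear_combination f p.1 * fourier (-n) p.2 * hcancel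
  set A := {p : X × AddCircle (1 : ℝ) | 0 < (f p.1 * fourier (-n) p.2).re}
  have hAinv : ∀ t, productFlow φ s t ⁻¹' A =ᵐ[μ.prod haarAddCircle] A := fun t =>
    (hinv t).mono fun p hp => congrArg (fun z : ℂ => 0 < z.re) hp
  rcases h A (measurableSet_pos_re_mul_fourier hf _) hAinv with h0 | h1
  · exact hf0 (ae_eq_zero_of_measure_pos_re_mul_fourier_eq_zero hf (neg_ne_zero.2 hn) h0)
  · have hnegA : {p : X × AddCircle (1 : ℝ) | 0 < ((-f) p.1 * fourier (-n) p.2).re} ⊆ Aᶜ := by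
      intro p hp hpA
      simp only [Set.mem_ofPred_eq, Pi.neg_apply, neg_mul, neg_re] at hp
      exact lt_asymm hpA (neg_pos.1 hp)
    have hAc : μ.prod haarAddCircle Aᶜ = 0 :=
      (prob_compl_eq_zero_iff (measurableSet_pos_re_mul_fourier hf _)).2 h1
    refine hf0 ?_
    filter_upwards [ae_eq_zero_of_measure_pos_re_mul_fourier_eq_zero hf.neg (neg_ne_zero.2 hn)
      (measure_mono_null hnegA hAc)] with x hx
    simpa using hx

lemma ae_fourierCoeff_indicator_slice_eq_zero
    (h : ∀ n : ℤ, n ≠ 0 → ¬ IsMeasEigenvalue μ φ (n * s)) {A : Set (X × AddCircle (1 : ℝ))}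
    (hA : MeasurableSet A) (hAinv : ∀ t, productFlow φ s t ⁻¹' A =ᵐ[μ.prod haarAddCircle] A) :
    ∀ᵐ x ∂μ, ∀ n : ℤ, n ≠ 0 →
      fourierCoeff ((Prod.mk x ⁻¹' A).indicator (1 : AddCircle (1 : ℝ) → ℂ)) n = 0 := by
  rw [ae_all_iff]
  intro n
  rw [eventually_imp_distrib_left]
  intro hn
  by_contra hne
  refine h (-n) (neg_ne_zero.2 hn) ⟨_, measurable_fourierCoeff_slice
    (measurable_one.indicator hA) n, hne, fun t => ?_⟩
  have hind : ∀ᵐ p ∂μ.prod haarAddCircle,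
      A.indicator (1 : X × AddCircle (1 : ℝ) → ℂ) (productFlow φ s t p) = A.indicator 1 p :=
    (indicator_ae_eq_of_ae_eq_set (hAinv t)).mono fun p hp =>
      (Set.indicator_comp_right _).symm.trans hp
  filter_upwards [ae_fourierCoeff_slice_eq_fourier_mul hind n] with x hx
  rw [← fourier_coe_mul_eq_exp]
  exact hx

theorem flowErgodic_productFlow_of_not_isMeasEigenvalue (herg : FlowErgodic μ φ)
    (h : ∀ n : ℤ, n ≠ 0 → ¬ IsMeasEigenvalue μ φ (n * s)) :
    FlowErgodic (μ.prod haarAddCircle) (productFlow φ s) := by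
  intro A hA hAinv
  set m : X → ENNReal := fun x => haarAddCircle (Prod.mk x ⁻¹' A)
  have hm : Measurable m := measurable_measure_prodMk_left hA
  have hm01 : ∀ᵐ x ∂μ, m x = 0 ∨ m x = 1 := by
    filter_upwards [ae_fourierCoeff_indicator_slice_eq_zero h hA hAinv] with x hx
    exact measure_eq_zero_or_one_of_fourierCoeff_indicator_eq_zero (measurable_prodMk_left hA) hx
  set B := m ⁻¹' {1}
  have hB : MeasurableSet B := hm (measurableSet_singleton 1)
  have hBinv : ∀ t, φ t ⁻¹' B =ᵐ[μ] B := fun t =>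
    (ae_measure_slice_eq_of_preimage_ae_eq (hAinv t)).mono fun x hx =>
      congrArg (· = (1 : ENNReal)) hx
  have hAB : μ.prod haarAddCircle A = μ B := by
    rw [Measure.prod_apply hA, ← lintegral_indicator_one hB]
    refine lintegral_congr_ae (hm01.mono fun x hx => ?_)
    show m x = B.indicator 1 x
    rcases hx with hx | hx <;> simp [B, hx]
  rw [hAB]
  exact herg B hB hBinv

end Flow

theorem stmt_2_general
    {X : Type*} [MeasurableSpace X] (μ : Measure X) [IsProbabilityMeasure μ]
    (φ : ℝ → X → X)
    (herg : FlowErgodic μ φ)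
    (s : ℝ) :
    FlowErgodic (μ.prod (volume : Measure (AddCircle (1 : ℝ))))
        (fun t p => (φ t p.1, p.2 + ((s * t : ℝ) : AddCircle (1 : ℝ)))) ↔
      ∀ n : ℤ, n ≠ 0 → ¬ IsMeasEigenvalue μ φ ((n : ℝ) * s) := by
  have hvol : (volume : Measure (AddCircle (1 : ℝ))) = haarAddCircle := by
    simp [volume_eq_smul_haarAddCircle]
  rw [hvol]
  exact ⟨fun h _ hn => not_isMeasEigenvalue_of_flowErgodic_productFlow h hn,
    flowErgodic_productFlow_of_not_isMeasEigenvalue herg⟩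

theorem stmt_2
    {X : Type*} [MeasurableSpace X] (μ : Measure X) [IsProbabilityMeasure μ]
    (φ : ℝ → X → X)
    (hφmeas : Measurable fun p : ℝ × X => φ p.1 p.2)
    (hφ0 : φ 0 = id)
    (hφadd : ∀ s t : ℝ, φ (s + t) = φ s ∘ φ t)
    (hφpres : ∀ t : ℝ, MeasurePreserving (φ t) μ μ)
    (herg : FlowErgodic μ φ)
    (s : ℝ) :
    FlowErgodic (μ.prod (volume : Measure (AddCircle (1 : ℝ))))
        (fun t p => (φ t p.1, p.2 + ((s * t : ℝ) : AddCircle (1 : ℝ)))) ↔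
      ∀ n : ℤ, n ≠ 0 → ¬ IsMeasEigenvalue μ φ ((n : ℝ) * s) :=
  stmt_2_general μ φ herg s
end

section
/- Let g ≥ 2 and let A be a 2g × 2g integer matrix lying in the symplectic group Sp(2g, ℤ), i.e., Aᵀ J A = J where J is the standard symplectic form. If β is a Pisot number and β is an eigenvalue of A regarded as a real matrix (equivalently, β is a root of the characteristic polynomial of A), then the degree of β over ℚ is at most g. -/
/-!
The characteristic polynomial `p` of a symplectic matrix is palindromic: `A⁻¹ = -J Aᵀ J` has the
same characteristic polynomial as `A`, and since `det A = 1` this says `p.reverse = p`.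
Let `q` be the minimal polynomial of `β`, a factor of `p`. If `q` does not divide its reverse, then
`q` and `q.reverse` are coprime factors of `p`, so `2 deg q ≤ deg p = 2g`. Otherwise `q` is
associated to its reverse, so its complex roots are closed under `z ↦ z⁻¹`; a root `z ∉ {β, β⁻¹}`
would then have `‖z‖ < 1` and `‖z⁻¹‖ < 1`, which is absurd, so `deg q ≤ 2 ≤ g`.
-/

open Matrix

/-- A Pisot number: a real algebraic integer `β > 1` all of whose Galois conjugates
(the other complex roots of its minimal polynomial over `ℚ`) have modulus `< 1`. -/
def IsPisot (β : ℝ) : Prop :=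
  1 < β ∧ IsIntegral ℤ β ∧
    ∀ z : ℂ, z ≠ (β : ℂ) → Polynomial.aeval z (minpoly ℚ β) = 0 → ‖z‖ < 1

open Polynomial

namespace Polynomial

theorem aeval_inv_eq_zero_of_reverse_dvd {R L : Type*} [CommRing R] [Field L] [Algebra R L]
    {p : R[X]} (hp : p.reverse ∣ p) {z : L} (hz : aeval z p = 0) : aeval z⁻¹ p = 0 := by
  rcases eq_or_ne z 0 with rfl | hz0
  · rwa [_root_.inv_zero]
  have : Invertible z := invertibleOfNonzero hz0
  have hrev : aeval z⁻¹ p.reverse = 0 := by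
    rw [aeval_def, ← invOf_eq_inv, eval₂_reverse_eq_zero_iff, ← aeval_def, hz]
  obtain ⟨r, hr⟩ := hp
  rw [hr, map_mul, hrev, zero_mul]

variable {K : Type*} [Field K]

theorem reverse_dvd_of_dvd_reverse {q : K[X]} (hq : q ≠ 0) (h : q ∣ q.reverse) : q.reverse ∣ q :=
  (associated_of_dvd_of_natDegree_le h (reverse_eq_zero.not.2 hq)
    q.reverse_natDegree_le).symm.dvd

theorem natDegree_reverse_of_coeff_zero_ne_zero {q : K[X]} (hq : q.coeff 0 ≠ 0) :
    q.reverse.natDegree = q.natDegree := by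
  rw [reverse_natDegree, natTrailingDegree_eq_zero.2 (Or.inr hq), Nat.sub_zero]

theorem two_mul_natDegree_le_of_dvd_of_reverse_eq {p q : K[X]} (hq : Irreducible q)
    (hq0 : q.coeff 0 ≠ 0) (hqrev : ¬q ∣ q.reverse) (hqp : q ∣ p) (hp : p.reverse = p)
    (hp0 : p ≠ 0) : 2 * q.natDegree ≤ p.natDegree := by
  have hrevp : q.reverse ∣ p := by
    obtain ⟨r, rfl⟩ := hqp
    exact ⟨r.reverse, by rw [← hp, reverse_mul_of_domain]⟩
  have hcop : IsCoprime q q.reverse := (hq.coprime_iff_not_dvd).2 hqrev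
  have := natDegree_le_of_dvd (hcop.mul_dvd hqp hrevp) hp0
  rwa [natDegree_mul hq.ne_zero (reverse_eq_zero.not.2 hq.ne_zero),
    natDegree_reverse_of_coeff_zero_ne_zero hq0, ← two_mul] at this

end Polynomial

namespace SymplecticGroup

variable {l R : Type*} [DecidableEq l] [Fintype l] [CommRing R] {A : Matrix (l ⊕ l) (l ⊕ l) R}

theorem charpoly_inv (hA : A ∈ symplecticGroup l R) : A⁻¹.charpoly = A.charpoly := by
  rw [inv_eq_symplectic_inv A hA, Matrix.mul_assoc, charpoly_mul_comm, Matrix.mul_assoc,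
    Matrix.mul_neg, J_squared, neg_neg, Matrix.mul_one, charpoly_transpose]

theorem reverse_charpoly_eq (hA : A ∈ symplecticGroup l R) : A.charpoly.reverse = A.charpoly := by
  have hunit : IsUnit A := (Matrix.isUnit_iff_isUnit_det A).2 (symplectic_det hA)
  rw [Matrix.reverse_charpoly, ← charpoly_inv hA, Matrix.charpoly_inv A hunit, det_eq_one hA]
  simp [Fintype.card_sum, ← two_mul, pow_mul]

end SymplecticGroup

theorem IsPisot.ne_zero {β : ℝ} (hβ : IsPisot β) : β ≠ 0 := (zero_lt_one.trans hβ.1).ne'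

theorem IsPisot.isIntegral {β : ℝ} (hβ : IsPisot β) : IsIntegral ℚ β := hβ.2.1.tower_top

theorem IsPisot.natDegree_minpoly_le_two_of_dvd_reverse {β : ℝ} (hβ : IsPisot β)
    (h : minpoly ℚ β ∣ (minpoly ℚ β).reverse) : (minpoly ℚ β).natDegree ≤ 2 := by
  set q := minpoly ℚ β
  have hq0 : q.coeff 0 ≠ 0 := minpoly.coeff_zero_ne_zero hβ.isIntegral hβ.ne_zero
  have hqrev : q.reverse ∣ q := reverse_dvd_of_dvd_reverse (minpoly.ne_zero hβ.isIntegral) h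
  have hroots : q.rootSet ℂ ⊆ {(β : ℂ), (β : ℂ)⁻¹} := by
    intro z hz
    have hzq : aeval z q = 0 := (mem_rootSet.1 hz).2
    have hz0 : z ≠ 0 := by
      rintro rfl
      exact hq0 (by simpa [aeval_def, eval₂_at_zero] using hzq)
    by_contra hne
    simp only [Set.mem_insert_iff, Set.mem_singleton_iff, not_or] at hne
    have hnorm : ‖z‖ < 1 := hβ.2.2 z hne.1 hzq
    have hnorm_inv : ‖z⁻¹‖ < 1 := hβ.2.2 z⁻¹ (fun h => hne.2 (by rw [← h, inv_inv]))
      (aeval_inv_eq_zero_of_reverse_dvd hqrev hzq)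
    rw [norm_inv] at hnorm_inv
    exact (one_lt_inv₀ (norm_pos_iff.2 hz0)).2 hnorm |>.not_gt hnorm_inv
  calc q.natDegree = Fintype.card (q.rootSet ℂ) :=
        (card_rootSet_eq_natDegree (minpoly.irreducible hβ.isIntegral).separable
          (IsAlgClosed.splits _)).symm
    _ = (q.rootSet ℂ).ncard := Set.fintypeCard_eq_ncard _
    _ ≤ ({(β : ℂ), (β : ℂ)⁻¹} : Set ℂ).ncard := Set.ncard_le_ncard hroots
    _ ≤ 2 := (Set.ncard_insert_le _ _).trans (by simp)

theorem stmt_8 (g : ℕ) (hg : 2 ≤ g)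
    (A : Matrix (Fin g ⊕ Fin g) (Fin g ⊕ Fin g) ℤ)
    (hA : Aᵀ * Matrix.fromBlocks (0 : Matrix (Fin g) (Fin g) ℤ) (-1) 1 0 * A =
      Matrix.fromBlocks (0 : Matrix (Fin g) (Fin g) ℤ) (-1) 1 0)
    (β : ℝ) (hβ : IsPisot β)
    (hroot : ((A.map (Int.cast : ℤ → ℝ)).charpoly).eval β = 0) :
    (minpoly ℚ β).natDegree ≤ g := by
  set p := (A.map (Int.castRingHom ℚ)).charpoly
  have hsymp : A.map (Int.castRingHom ℚ) ∈ symplecticGroup (Fin g) ℚ :=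
    SymplecticGroup.map_mem (SymplecticGroup.mem_iff'.2 hA) _
  have hpβ : aeval β p = 0 := by
    rw [aeval_def, ← eval_map, ← charpoly_map, Matrix.map_map]
    exact hroot
  by_cases hrev : minpoly ℚ β ∣ (minpoly ℚ β).reverse
  · exact (hβ.natDegree_minpoly_le_two_of_dvd_reverse hrev).trans hg
  · have := two_mul_natDegree_le_of_dvd_of_reverse_eq (minpoly.irreducible hβ.isIntegral)
      (minpoly.coeff_zero_ne_zero hβ.isIntegral hβ.ne_zero) hrev (minpoly.dvd ℚ β hpβ)
      (SymplecticGroup.reverse_charpoly_eq hsymp) (charpoly_monic _).ne_zero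
    rw [charpoly_natDegree_eq_dim, Fintype.card_sum, Fintype.card_fin] at this
    omega
end

section
/- Let I ⊆ ℝ be a nonempty closed bounded interval and let G ⊆ I × ℂ be a bounded set. For x ∈ I and ε > 0 let N_ε(x) = {y ∈ ℂ : there exists x' ∈ I with |x − x'| < ε and (x', y) ∈ G}, and define the oscillation of G at x as Osc(x) = lim_{ε → 0⁺} sup{|y' − y''| : y', y'' ∈ N_ε(x)}. Then the closure of G in ℝ × ℂ is the graph of a continuous function I → ℂ if and only if the projection of G to I is dense in I and Osc(x) = 0 for every x ∈ I. -/
/-!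
Since `G` is bounded, `closure G` is compact, so its projection to the first factor is closed;
density of `Prod.fst '' G` then makes every fibre of `closure G` over `I` nonempty. A point of the
fibre over `x` lies in the closure of `N_ε(x)` for every `ε > 0`, so any two such points are at
distance at most `diam N_ε(x)`, which tends to `0`: the fibres are single points, and `closure G`
is the graph of some `f` over `I`. A function whose graph over `I` is compact is continuous there,
because the preimage of a closed set is the projection of a compact set. Conversely, if `f` is
continuous, `N_ε(x)` lies in a small ball around `f x` for small `ε`.
-/

open Filter Set Bornology Metric Topology

variable {X Y : Type*}

theorem continuousOn_of_isCompact_graph [TopologicalSpace X] [TopologicalSpace Y] [T2Space X]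
    {f : X → Y} {I : Set X} (hK : IsCompact ((fun x => (x, f x)) '' I)) : ContinuousOn f I := by
  rw [continuousOn_iff_isClosed]
  intro t ht
  refine ⟨Prod.fst '' ((fun x => (x, f x)) '' I ∩ univ ×ˢ t),
    ((hK.inter_right (isClosed_univ.prod ht)).image continuous_fst).isClosed, ?_⟩
  ext x
  constructor
  · rintro ⟨hxt, hxI⟩
    exact ⟨⟨(x, f x), ⟨⟨x, hxI, rfl⟩, trivial, hxt⟩, rfl⟩, hxI⟩
  · rintro ⟨⟨_, ⟨⟨x', -, rfl⟩, -, hx't⟩, rfl⟩, hxI⟩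
    exact ⟨hx't, hxI⟩

theorem exists_mem_closure_of_mem_closure_image_fst [TopologicalSpace X] [T2Space X]
    [TopologicalSpace Y] {G : Set (X × Y)} {x : X} (hK : IsCompact (closure G))
    (hx : x ∈ closure (Prod.fst '' G)) : ∃ y, (x, y) ∈ closure G := by
  rw [← image_closure_of_isCompact hK continuous_fst.continuousOn] at hx
  obtain ⟨⟨x, y⟩, h, rfl⟩ := hx
  exact ⟨y, h⟩

theorem sSup_dist_eq_diam [PseudoMetricSpace Y] {S : Set Y} (hS : IsBounded S) :
    sSup {d : ℝ | ∃ y' y'' : Y, y' ∈ S ∧ y'' ∈ S ∧ d = dist y' y''} = diam S := by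
  have hle : ∀ d ∈ {d : ℝ | ∃ y' y'' : Y, y' ∈ S ∧ y'' ∈ S ∧ d = dist y' y''}, d ≤ diam S := by
    rintro _ ⟨y', y'', h', h'', rfl⟩
    exact dist_le_diam_of_mem hS h' h''
  apply le_antisymm (Real.sSup_le hle diam_nonneg)
  refine diam_le_of_forall_dist_le (Real.sSup_nonneg ?_) fun y' h' y'' h'' => ?_
  · rintro _ ⟨y', y'', -, -, rfl⟩
    exact dist_nonneg
  · exact le_csSup ⟨_, hle⟩ ⟨y', y'', h', h'', rfl⟩

section Oscillation

variable [PseudoMetricSpace X]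

/-- The set `N_ε(x)` of the oscillation. -/
def nearValues (I : Set X) (G : Set (X × Y)) (x : X) (ε : ℝ) : Set Y :=
  {y | ∃ x' ∈ I, dist x x' < ε ∧ (x', y) ∈ G}

variable {I : Set X} {G : Set (X × Y)} {x : X} {ε : ℝ}

theorem nearValues_subset_image_snd : nearValues I G x ε ⊆ Prod.snd '' G := by
  rintro y ⟨x', -, -, h⟩
  exact ⟨(x', y), h, rfl⟩

theorem isBounded_nearValues [PseudoMetricSpace Y] (hG : IsBounded (Prod.snd '' G)) :
    IsBounded (nearValues I G x ε) :=
  hG.subset nearValues_subset_image_snd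

theorem mem_closure_nearValues [TopologicalSpace Y] {y : Y} (hGI : ∀ p ∈ G, p.1 ∈ I)
    (h : (x, y) ∈ closure G) (hε : 0 < ε) : y ∈ closure (nearValues I G x ε) := by
  rw [_root_.mem_closure_iff] at h ⊢
  intro o ho hy
  obtain ⟨⟨x', y'⟩, ⟨hx', hy'⟩, hG⟩ :=
    h (ball x ε ×ˢ o) (isOpen_ball.prod ho) ⟨mem_ball_self hε, hy⟩
  exact ⟨y', hy', x', hGI _ hG, mem_ball'.1 hx', hG⟩

theorem dist_le_diam_nearValues [PseudoMetricSpace Y] {y₁ y₂ : Y} (hGI : ∀ p ∈ G, p.1 ∈ I)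
    (hG : IsBounded (Prod.snd '' G)) (h₁ : (x, y₁) ∈ closure G) (h₂ : (x, y₂) ∈ closure G)
    (hε : 0 < ε) : dist y₁ y₂ ≤ diam (nearValues I G x ε) := by
  rw [← diam_closure]
  exact dist_le_diam_of_mem (isBounded_nearValues hG).closure
    (mem_closure_nearValues hGI h₁ hε) (mem_closure_nearValues hGI h₂ hε)

theorem eq_of_mem_closure_of_tendsto_diam_nearValues [MetricSpace Y] {y₁ y₂ : Y}
    (hGI : ∀ p ∈ G, p.1 ∈ I) (hG : IsBounded (Prod.snd '' G))
    (hosc : Tendsto (fun ε => diam (nearValues I G x ε)) (𝓝[>] 0) (𝓝 0))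
    (h₁ : (x, y₁) ∈ closure G) (h₂ : (x, y₂) ∈ closure G) : y₁ = y₂ :=
  dist_le_zero.1 <| ge_of_tendsto hosc <| eventually_nhdsWithin_of_forall fun _ hε =>
    dist_le_diam_nearValues hGI hG h₁ h₂ hε

theorem tendsto_diam_nearValues [PseudoMetricSpace Y] {f : X → Y}
    (hGf : ∀ p ∈ G, p.2 = f p.1) (hf : ContinuousWithinAt f I x) :
    Tendsto (fun ε => diam (nearValues I G x ε)) (𝓝[>] 0) (𝓝 0) := by
  rw [Metric.tendsto_nhds]
  intro δ hδ
  obtain ⟨ε₀, hε₀, hc⟩ := Metric.continuousWithinAt_iff.1 hf (δ / 3) (by positivity)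
  filter_upwards [Ioo_mem_nhdsGT hε₀] with ε hε
  have hsub : nearValues I G x ε ⊆ closedBall (f x) (δ / 3) := by
    rintro y ⟨x', hx', hdist, hG⟩
    have hy : y = f x' := hGf _ hG
    rw [mem_closedBall, hy]
    exact (hc hx' (by rw [dist_comm]; exact hdist.trans hε.2)).le
  rw [Real.dist_0_eq_abs, abs_of_nonneg diam_nonneg]
  linarith [diam_le_of_subset_closedBall (by positivity : (0:ℝ) ≤ δ / 3) hsub]

end Oscillation

section ClosureGraph

variable [MetricSpace X] [MetricSpace Y] [Nonempty Y] {I : Set X} {G : Set (X × Y)}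

theorem exists_continuousOn_closure_eq_graph (hI : IsClosed I) (hGI : ∀ p ∈ G, p.1 ∈ I)
    (hK : IsCompact (closure G)) (hdense : I ⊆ closure (Prod.fst '' G))
    (hosc : ∀ x ∈ I, Tendsto (fun ε => diam (nearValues I G x ε)) (𝓝[>] 0) (𝓝 0)) :
    ∃ f : X → Y, ContinuousOn f I ∧ closure G = (fun x => (x, f x)) '' I := by
  have hG : IsBounded (Prod.snd '' G) := (hK.isBounded.subset subset_closure).image_snd
  have hfib : ∀ x ∈ I, ∃ y, (x, y) ∈ closure G := fun x hx =>
    exists_mem_closure_of_mem_closure_image_fst hK (hdense hx)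
  choose! f hf using hfib
  have hgraph : closure G = (fun x => (x, f x)) '' I := by
    refine Subset.antisymm ?_ (image_subset_iff.2 hf)
    rintro ⟨x, y⟩ hxy
    have hx : x ∈ I := (closure_minimal (fun p hp => mk_mem_prod (hGI p hp) (mem_univ p.2))
      (hI.prod isClosed_univ) hxy).1
    rw [eq_of_mem_closure_of_tendsto_diam_nearValues hGI hG (hosc x hx) hxy (hf x hx)]
    exact mem_image_of_mem _ hx
  exact ⟨f, continuousOn_of_isCompact_graph (hgraph ▸ hK), hgraph⟩

theorem closure_eq_graph_iff (hI : IsClosed I) (hGI : ∀ p ∈ G, p.1 ∈ I)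
    (hK : IsCompact (closure G)) :
    (∃ f : X → Y, ContinuousOn f I ∧ closure G = (fun x => (x, f x)) '' I) ↔
      I ⊆ closure (Prod.fst '' G) ∧
        ∀ x ∈ I, Tendsto (fun ε => diam (nearValues I G x ε)) (𝓝[>] 0) (𝓝 0) := by
  refine ⟨fun ⟨f, hf, hgraph⟩ => ⟨fun x hx => ?_, fun x hx => ?_⟩,
    fun ⟨hdense, hosc⟩ => exists_continuousOn_closure_eq_graph hI hGI hK hdense hosc⟩
  · have hx' : (x, f x) ∈ closure G := hgraph ▸ mem_image_of_mem _ hx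
    exact image_closure_subset_closure_image continuous_fst (mem_image_of_mem _ hx')
  · refine tendsto_diam_nearValues (fun p hp => ?_) (hf x hx)
    obtain ⟨x', -, hx'⟩ := hgraph ▸ subset_closure hp
    rw [← hx']

end ClosureGraph

theorem stmt_10_general
    (a b : ℝ)
    (G : Set (ℝ × ℂ))
    (hGsub : ∀ p ∈ G, p.1 ∈ Set.Icc a b)
    (hGbd : Bornology.IsBounded G) :
    (∃ f : ℝ → ℂ, ContinuousOn f (Set.Icc a b) ∧
        closure G = (fun x => (x, f x)) '' Set.Icc a b) ↔
      (Set.Icc a b ⊆ closure (Prod.fst '' G)) ∧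
        ∀ x ∈ Set.Icc a b,
          Tendsto
            (fun ε : ℝ =>
              sSup {d : ℝ | ∃ y' y'' : ℂ,
                (∃ x' ∈ Set.Icc a b, |x - x'| < ε ∧ (x', y') ∈ G) ∧
                (∃ x'' ∈ Set.Icc a b, |x - x''| < ε ∧ (x'', y'') ∈ G) ∧
                d = ‖y' - y''‖})
            (nhdsWithin 0 (Set.Ioi 0)) (nhds 0) := by
  convert closure_eq_graph_iff isClosed_Icc hGsub hGbd.isCompact_closure using 6 with x _ ε
  simpa only [nearValues, mem_ofPred_eq, Real.dist_eq, Complex.dist_eq] using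
    sSup_dist_eq_diam (isBounded_nearValues (I := Icc a b) (x := x) (ε := ε) hGbd.image_snd)

theorem stmt_10
    (a b : ℝ) (hab : a ≤ b)
    (G : Set (ℝ × ℂ))
    (hGsub : ∀ p ∈ G, p.1 ∈ Set.Icc a b)
    (hGbd : Bornology.IsBounded G) :
    (∃ f : ℝ → ℂ, ContinuousOn f (Set.Icc a b) ∧
        closure G = (fun x => (x, f x)) '' Set.Icc a b) ↔
      (Set.Icc a b ⊆ closure (Prod.fst '' G)) ∧
        ∀ x ∈ Set.Icc a b,
          Tendsto
            (fun ε : ℝ =>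
              sSup {d : ℝ | ∃ y' y'' : ℂ,
                (∃ x' ∈ Set.Icc a b, |x - x'| < ε ∧ (x', y') ∈ G) ∧
                (∃ x'' ∈ Set.Icc a b, |x - x''| < ε ∧ (x'', y'') ∈ G) ∧
                d = ‖y' - y''‖})
            (nhdsWithin 0 (Set.Ioi 0)) (nhds 0) :=
  stmt_10_general a b G hGsub hGbd
end

section
/- Let T₀ be an interval exchange transformation on [0, L) with intervals of continuity I₁, …, I_k, on each of which T₀ is a translation. Let λ ∈ (0, 1) and assume: (a) every point of [0, λL) returns to [0, λL) under forward iteration of T₀; (b) for each i, all points of λ·I_i = {λx : x ∈ I_i} have the same first-return time r_i to [0, λL), and for each 0 ≤ m < r_i there is an index j(i, m) with T₀^m(λ·I_i) ⊆ I_{j(i,m)}. Let v = (v₁, …, v_k) ∈ ℂᵏ and define the skew product T_v on [0, L) × ℂ by T_v(x, z) = (T₀(x), z + v_i) when x ∈ I_i. Let μ ∈ ℂ with |μ| < 1, set R_μ(x, z) = (λx, μz), and let 𝑇̂_v denote the first-return map of T_v to [0, λL) × ℂ. If 𝑇̂_v ∘ R_μ = R_μ ∘ T_v on [0, L) × ℂ,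 then the forward orbit {T_v^m(0, 0) : m ≥ 0} is a bounded subset of ℝ × ℂ. -/
/-!
By the conjugacy, `R_μ` carries the `T_v`-orbit of `(0, 0)` onto its `𝑇̂_v`-orbit, and one step
of `𝑇̂_v` is a block of at most `R = ∑ rᵢ` steps of `T_v`: the first return to `[0, λL) × ℂ`
comes no later than the return at time `rᵢ`. Hence the second coordinates `zₙ` of the orbit
satisfy `z_{N s} = μ z_s` along times `N s` with gaps at most `R`. As each step of `T_v` moves `z`
by at most `V = ∑ ‖vᵢ‖`, every `zₙ` obeys `‖zₙ‖ ≤ ‖μ‖ ‖z_s‖ + R V` for some `s ≤ n`, and strong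
induction gives `‖zₙ‖ ≤ R V / (1 - ‖μ‖)`.
-/

open Set Function

theorem exists_mem_Ico_castSucc_succ {α : Type*} [LinearOrder α] {k : ℕ}
    (pts : Fin (k + 1) → α) {x : α} (h0 : pts 0 ≤ x) (hlast : x < pts (Fin.last k)) :
    ∃ i : Fin k, x ∈ Ico (pts i.castSucc) (pts i.succ) := by
  by_contra! h
  simp only [mem_Ico, not_and, not_lt] at h
  have hle : ∀ i : Fin (k + 1), pts i ≤ x := fun i => by
    induction i using Fin.induction with
    | zero => exact h0
    | succ i ih => exact h i ih
  exact (hle _).not_gt hlast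

theorem Set.MapsTo.iterate_semiconj {α β : Type*} {g : α → α} {f : β → β} {φ : α → β}
    {s : Set α} (hg : MapsTo g s s) (h : ∀ x ∈ s, φ (g x) = f (φ x)) (n : ℕ) {x : α}
    (hx : x ∈ s) : φ (g^[n] x) = f^[n] (φ x) := by
  induction n generalizing x with
  | zero => rfl
  | succ n ih => rw [iterate_succ_apply, iterate_succ_apply, ih (hg hx), h x hx]

theorem exists_strictMono_iterate_eq_iterate {α : Type*} {f g : α → α} {x : α} {R : ℕ}
    (h : ∀ s, ∃ m, 1 ≤ m ∧ m ≤ R ∧ f^[s + 1] x = g^[m] (f^[s] x)) :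
    ∃ N : ℕ → ℕ, StrictMono N ∧ N 0 = 0 ∧ (∀ s, N (s + 1) ≤ N s + R) ∧
      ∀ s, f^[s] x = g^[N s] x := by
  choose m hm1 hmR hm using h
  set N : ℕ → ℕ := fun s => ∑ t ∈ Finset.range s, m t
  have hNs : ∀ s, N (s + 1) = N s + m s := fun s => Finset.sum_range_succ m s
  refine ⟨N, strictMono_nat_of_lt_succ fun s => ?_, rfl, fun s => ?_, fun s => ?_⟩
  · linarith [hNs s, hm1 s]
  · linarith [hNs s, hmR s]
  · induction s with
    | zero => rfl
    | succ s ih => rw [hm, ih, hNs, add_comm, iterate_add_apply]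

theorem exists_strictMono_iterate_eq_of_semiconj {α : Type*} {f g φ : α → α} {S : Set α}
    {x₀ : α} {R : ℕ} (hg : MapsTo g S S) (hconj : ∀ x ∈ S, f (φ x) = φ (g x))
    (hx₀ : x₀ ∈ S) (hφ : φ x₀ = x₀)
    (hret : ∀ x ∈ S, ∃ m, 1 ≤ m ∧ m ≤ R ∧ f (φ x) = g^[m] (φ x)) :
    ∃ N : ℕ → ℕ, StrictMono N ∧ N 0 = 0 ∧ (∀ s, N (s + 1) ≤ N s + R) ∧
      ∀ n, g^[N n] x₀ = φ (g^[n] x₀) := by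
  have hit : ∀ n, f^[n] x₀ = φ (g^[n] x₀) := fun n => by
    simpa [hφ] using (hg.iterate_semiconj (fun x hx => (hconj x hx).symm) n hx₀).symm
  obtain ⟨N, hN, hN0, hgap, hNf⟩ :=
    exists_strictMono_iterate_eq_iterate (f := f) (g := g) (x := x₀) (R := R) fun n => by
      obtain ⟨m, hm1, hmR, hm⟩ := hret _ (hg.iterate n hx₀)
      exact ⟨m, hm1, hmR, by rw [iterate_succ_apply', hit, hm]⟩
  exact ⟨N, hN, hN0, hgap, fun n => (hNf n).symm.trans (hit n)⟩

theorem StrictMono.exists_le_lt_succ {N : ℕ → ℕ} (hN : StrictMono N) (h0 : N 0 = 0)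
    (n : ℕ) : ∃ s, N s ≤ n ∧ n < N (s + 1) := by
  induction n with
  | zero => exact ⟨0, h0.le, h0.symm.trans_lt (hN (Nat.lt_succ_self 0))⟩
  | succ n ih =>
    obtain ⟨s, hsn, hns⟩ := ih
    rcases (Nat.succ_le_of_lt hns).lt_or_eq with hlt | heq
    · exact ⟨s, hsn.trans n.le_succ, hlt⟩
    · exact ⟨s + 1, heq.ge, heq.trans_lt (hN (Nat.lt_succ_self (s + 1)))⟩

theorem le_div_one_sub_of_forall_exists_le {a : ℕ → ℝ} {c B : ℝ} (hc0 : 0 ≤ c)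
    (hc1 : c < 1) (h : ∀ n, ∃ s ≤ n, a n ≤ c * a s + B) (n : ℕ) : a n ≤ B / (1 - c) := by
  induction n using Nat.strong_induction_on with
  | _ n ih =>
    obtain ⟨s, hsn, hs⟩ := h n
    rw [le_div_iff₀ (sub_pos.2 hc1)]
    rcases hsn.lt_or_eq with hlt | rfl
    · have := (le_div_iff₀ (sub_pos.2 hc1)).1 (ih s hlt)
      nlinarith [mul_le_mul_of_nonneg_left this hc0]
    · linarith

theorem le_div_one_sub_of_renormalization {a : ℕ → ℝ} {N : ℕ → ℕ} {R : ℕ} {c V : ℝ}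
    (hN : StrictMono N) (hN0 : N 0 = 0) (hgap : ∀ s, N (s + 1) ≤ N s + R)
    (hc0 : 0 ≤ c) (hc1 : c < 1) (hV : 0 ≤ V)
    (hstep : ∀ n, a (n + 1) ≤ a n + V) (hscale : ∀ s, a (N s) ≤ c * a s) (n : ℕ) :
    a n ≤ R * V / (1 - c) := by
  have hanti : Antitone fun n : ℕ => a n - n * V :=
    antitone_nat_of_succ_le fun n => by push_cast; linarith [hstep n]
  refine le_div_one_sub_of_forall_exists_le hc0 hc1 (fun n => ?_) n
  obtain ⟨s, hsn, hns⟩ := hN.exists_le_lt_succ hN0 n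
  have hdrift : (n : ℝ) ≤ N s + R := by exact_mod_cast (hns.trans_le (hgap s)).le
  refine ⟨s, (hN.id_le s).trans hsn, ?_⟩
  nlinarith [hanti hsn, hscale s, mul_nonneg (sub_nonneg.2 hdrift) hV]

section SkewProduct

variable {α E ι : Type*} [SeminormedAddCommGroup E] {D : Set α} {T₀ : α → α}
  {v : ι → E} {Tv : α × E → α × E}

theorem mapsTo_fst_preimage_of_skew (hT₀ : MapsTo T₀ D D)
    (hskew : ∀ p : α × E, p.1 ∈ D → ∃ i, Tv p = (T₀ p.1, p.2 + v i)) :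
    MapsTo Tv (Prod.fst ⁻¹' D) (Prod.fst ⁻¹' D) := fun p hp => by
  obtain ⟨i, hi⟩ := hskew p hp
  rw [mem_preimage, hi]
  exact hT₀ hp

theorem fst_iterate_of_skew (hT₀ : MapsTo T₀ D D)
    (hskew : ∀ p : α × E, p.1 ∈ D → ∃ i, Tv p = (T₀ p.1, p.2 + v i)) (n : ℕ) {p : α × E}
    (hp : p.1 ∈ D) : (Tv^[n] p).1 = T₀^[n] p.1 :=
  (mapsTo_fst_preimage_of_skew hT₀ hskew).iterate_semiconj
    (fun q hq => by obtain ⟨i, hi⟩ := hskew q hq; rw [hi]) n hp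

theorem norm_snd_le_of_skew [Fintype ι]
    (hskew : ∀ p : α × E, p.1 ∈ D → ∃ i, Tv p = (T₀ p.1, p.2 + v i)) {p : α × E}
    (hp : p.1 ∈ D) : ‖(Tv p).2‖ ≤ ‖p.2‖ + ∑ i, ‖v i‖ := by
  obtain ⟨i, hi⟩ := hskew p hp
  rw [hi]
  exact (norm_add_le _ _).trans
    (add_le_add le_rfl
      (Finset.single_le_sum (fun j _ => norm_nonneg (v j)) (Finset.mem_univ i)))

end SkewProduct

theorem exists_iterate_eq_firstReturn_le_sum {ι E : Type*} [Fintype ι] {I : ι → Set ℝ}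
    {L lam : ℝ} {T₀ : ℝ → ℝ} {Tv That : ℝ × E → ℝ × E} {r : ι → ℕ}
    (hlam0 : 0 < lam) (hlam1 : lam ≤ 1) (hcover : ∀ x ∈ Ico 0 L, ∃ i, x ∈ I i)
    (hfst : ∀ n, ∀ p : ℝ × E, p.1 ∈ Ico 0 L → (Tv^[n] p).1 = T₀^[n] p.1)
    (hr1 : ∀ i, 1 ≤ r i) (hrret : ∀ i, ∀ x ∈ I i, T₀^[r i] (lam * x) ∈ Ico 0 (lam * L))
    (hThat : ∀ p : ℝ × E, p.1 ∈ Ico 0 (lam * L) →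
      ∃ m : ℕ, 1 ≤ m ∧ That p = Tv^[m] p ∧ (Tv^[m] p).1 ∈ Ico 0 (lam * L) ∧
        ∀ m' : ℕ, 1 ≤ m' → m' < m → (Tv^[m'] p).1 ∉ Ico 0 (lam * L))
    {x : ℝ} (hx : x ∈ Ico 0 L) (z : E) :
    ∃ m, 1 ≤ m ∧ m ≤ ∑ i, r i ∧ That (lam * x, z) = Tv^[m] (lam * x, z) := by
  obtain ⟨i, hi⟩ := hcover x hx
  have hq : lam * x ∈ Ico 0 (lam * L) :=
    ⟨mul_nonneg hlam0.le hx.1, mul_lt_mul_of_pos_left hx.2 hlam0⟩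
  obtain ⟨m, hm1, hm, -, hfirst⟩ := hThat (lam * x, z) hq
  have hri : (Tv^[r i] (lam * x, z)).1 ∈ Ico 0 (lam * L) := by
    rw [hfst _ _ ⟨hq.1, hq.2.trans_le (by nlinarith [hx.1, hx.2])⟩]
    exact hrret i x hi
  refine ⟨m, hm1, ?_, hm⟩
  calc m ≤ r i := not_lt.1 fun hlt => hfirst _ (hr1 i) hlt hri
    _ ≤ ∑ i, r i := Finset.single_le_sum (fun _ _ => Nat.zero_le _) (Finset.mem_univ i)

theorem stmt_11_general
    (L : ℝ) (hL : 0 < L) (k : ℕ)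
    -- the partition points 0 = x₀ < x₁ < ⋯ < x_k = L of the IET
    (pts : Fin (k + 1) → ℝ)
    (hpts0 : pts 0 = 0) (hptsL : pts (Fin.last k) = L)
    -- the interval exchange transformation T₀
    (T₀ : ℝ → ℝ)
    (hbij : Set.BijOn T₀ (Set.Ico 0 L) (Set.Ico 0 L))
    -- the scaling factor λ
    (lam : ℝ) (hlam : lam ∈ Set.Ioo (0 : ℝ) 1)
    -- (b) constant first-return times on each λ·Iᵢ, with itineraries within single intervals
    (r : Fin k → ℕ) (hr1 : ∀ i, 1 ≤ r i)
    (hrret : ∀ i : Fin k, ∀ x ∈ Set.Ico (pts i.castSucc) (pts i.succ),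
      T₀^[r i] (lam * x) ∈ Set.Ico 0 (lam * L) ∧
        ∀ m : ℕ, 1 ≤ m → m < r i → T₀^[m] (lam * x) ∉ Set.Ico 0 (lam * L))
    -- the skew product T_v
    (v : Fin k → ℂ)
    (Tv : ℝ × ℂ → ℝ × ℂ)
    (hTv : ∀ i : Fin k, ∀ x ∈ Set.Ico (pts i.castSucc) (pts i.succ), ∀ z : ℂ,
      Tv (x, z) = (T₀ x, z + v i))
    -- the contraction μ and the renormalization R_μ
    (μ : ℂ) (hμ : ‖μ‖ < 1)
    -- the first-return map of T_v to [0, λL) × ℂ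
    (That : ℝ × ℂ → ℝ × ℂ)
    (hThat : ∀ p : ℝ × ℂ, p.1 ∈ Set.Ico 0 (lam * L) →
      ∃ m : ℕ, 1 ≤ m ∧ That p = Tv^[m] p ∧ (Tv^[m] p).1 ∈ Set.Ico 0 (lam * L) ∧
        ∀ m' : ℕ, 1 ≤ m' → m' < m → (Tv^[m'] p).1 ∉ Set.Ico 0 (lam * L))
    -- the conjugacy 𝑇̂_v ∘ R_μ = R_μ ∘ T_v on [0, L) × ℂ
    (hconj : ∀ x ∈ Set.Ico (0 : ℝ) L, ∀ z : ℂ,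
      That (lam * x, μ * z) = (lam * (Tv (x, z)).1, μ * (Tv (x, z)).2)) :
    Bornology.IsBounded {p : ℝ × ℂ | ∃ m : ℕ, p = Tv^[m] ((0 : ℝ), (0 : ℂ))} := by
  have hidx (x : ℝ) (hx : x ∈ Ico 0 L) :
      ∃ i : Fin k, x ∈ Ico (pts i.castSucc) (pts i.succ) :=
    exists_mem_Ico_castSucc_succ pts (hpts0 ▸ hx.1) (hptsL ▸ hx.2)
  have hskew (p : ℝ × ℂ) (hp : p.1 ∈ Ico 0 L) : ∃ i, Tv p = (T₀ p.1, p.2 + v i) :=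
    (hidx p.1 hp).imp fun i hi => hTv i _ hi p.2
  have hmaps := mapsTo_fst_preimage_of_skew hbij.mapsTo hskew
  have h0 : ((0 : ℝ), (0 : ℂ)) ∈ Prod.fst ⁻¹' Ico 0 L := ⟨le_rfl, hL⟩
  obtain ⟨N, hN, hN0, hgap, hNo⟩ := exists_strictMono_iterate_eq_of_semiconj hmaps
    (fun p hp => hconj p.1 hp p.2) h0 (by simp) fun p hp =>
      exists_iterate_eq_firstReturn_le_sum hlam.1 hlam.2.le hidx
        (fun n q hq => fst_iterate_of_skew hbij.mapsTo hskew n hq) hr1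
        (fun i x hx => (hrret i x hx).1) hThat hp (μ * p.2)
  set C := (∑ i, r i) * (∑ i, ‖v i‖) / (1 - ‖μ‖)
  have hbound (n : ℕ) : ‖(Tv^[n] ((0 : ℝ), (0 : ℂ))).2‖ ≤ C :=
    le_div_one_sub_of_renormalization (a := fun n => ‖(Tv^[n] ((0 : ℝ), (0 : ℂ))).2‖)
      hN hN0 hgap (norm_nonneg μ) hμ (Finset.sum_nonneg fun i _ => norm_nonneg (v i))
      (fun n => by
        simpa only [iterate_succ_apply'] using norm_snd_le_of_skew hskew (hmaps.iterate n h0))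
      (fun s => by simp [hNo]) n
  refine ((Metric.isBounded_Icc 0 L).prod
    (Metric.isBounded_closedBall (x := (0 : ℂ)) (r := C))).subset ?_
  rintro _ ⟨n, rfl⟩
  exact ⟨Ico_subset_Icc_self (hmaps.iterate n h0), mem_closedBall_zero_iff.2 (hbound n)⟩

theorem stmt_11
    (L : ℝ) (hL : 0 < L) (k : ℕ) (hk : 0 < k)
    -- the partition points 0 = x₀ < x₁ < ⋯ < x_k = L of the IET
    (pts : Fin (k + 1) → ℝ) (hmono : StrictMono pts)
    (hpts0 : pts 0 = 0) (hptsL : pts (Fin.last k) = L)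
    -- the interval exchange transformation T₀
    (T₀ : ℝ → ℝ)
    (hbij : Set.BijOn T₀ (Set.Ico 0 L) (Set.Ico 0 L))
    (trans : Fin k → ℝ)
    (htrans : ∀ i : Fin k, ∀ x ∈ Set.Ico (pts i.castSucc) (pts i.succ), T₀ x = x + trans i)
    -- the scaling factor λ
    (lam : ℝ) (hlam : lam ∈ Set.Ioo (0 : ℝ) 1)
    -- (a) every point of [0, λL) returns to [0, λL)
    (hreturn : ∀ y ∈ Set.Ico 0 (lam * L), ∃ m : ℕ, 1 ≤ m ∧ T₀^[m] y ∈ Set.Ico 0 (lam * L))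
    -- (b) constant first-return times on each λ·Iᵢ, with itineraries within single intervals
    (r : Fin k → ℕ) (hr1 : ∀ i, 1 ≤ r i)
    (hrret : ∀ i : Fin k, ∀ x ∈ Set.Ico (pts i.castSucc) (pts i.succ),
      T₀^[r i] (lam * x) ∈ Set.Ico 0 (lam * L) ∧
        ∀ m : ℕ, 1 ≤ m → m < r i → T₀^[m] (lam * x) ∉ Set.Ico 0 (lam * L))
    (j : Fin k → ℕ → Fin k)
    (hj : ∀ i : Fin k, ∀ m : ℕ, m < r i → ∀ x ∈ Set.Ico (pts i.castSucc) (pts i.succ),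
      T₀^[m] (lam * x) ∈ Set.Ico (pts (j i m).castSucc) (pts (j i m).succ))
    -- the skew product T_v
    (v : Fin k → ℂ)
    (Tv : ℝ × ℂ → ℝ × ℂ)
    (hTv : ∀ i : Fin k, ∀ x ∈ Set.Ico (pts i.castSucc) (pts i.succ), ∀ z : ℂ,
      Tv (x, z) = (T₀ x, z + v i))
    -- the contraction μ and the renormalization R_μ
    (μ : ℂ) (hμ : ‖μ‖ < 1)
    -- the first-return map of T_v to [0, λL) × ℂ
    (That : ℝ × ℂ → ℝ × ℂ)
    (hThat : ∀ p : ℝ × ℂ, p.1 ∈ Set.Ico 0 (lam * L) →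
      ∃ m : ℕ, 1 ≤ m ∧ That p = Tv^[m] p ∧ (Tv^[m] p).1 ∈ Set.Ico 0 (lam * L) ∧
        ∀ m' : ℕ, 1 ≤ m' → m' < m → (Tv^[m'] p).1 ∉ Set.Ico 0 (lam * L))
    -- the conjugacy 𝑇̂_v ∘ R_μ = R_μ ∘ T_v on [0, L) × ℂ
    (hconj : ∀ x ∈ Set.Ico (0 : ℝ) L, ∀ z : ℂ,
      That (lam * x, μ * z) = (lam * (Tv (x, z)).1, μ * (Tv (x, z)).2)) :
    Bornology.IsBounded {p : ℝ × ℂ | ∃ m : ℕ, p = Tv^[m] ((0 : ℝ), (0 : ℂ))} :=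
  stmt_11_general L hL k pts hpts0 hptsL T₀ hbij lam hlam r hr1 hrret v Tv hTv μ hμ That hThat hconj
end

section
/- For every integer k ≥ 2, the polynomial P_k(x) = x³ − (2k+4)x² + (k+4)x − 1 is irreducible over ℚ and has three real roots; exactly one root β_k satisfies β_k > 1, the other two roots have absolute value strictly less than 1, and consequently β_k is a Pisot number of degree 3. -/
/-!
`P_k` takes the values `-1`, `1/8`, `-k` at `0`, `1/2`, `1` and is positive at `2k + 4`, so it
has real roots in `(0, 1/2)`, `(1/2, 1)` and `(1, 2k + 4)`; a cubic has no further complex roots.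
A rational root of the monic integer polynomial `P_k` would be an integer dividing its constant
term `-1`, and `P_k(±1) ≠ 0`, so `P_k` is irreducible and is therefore the minimal polynomial of
its root `β > 1`, whose conjugates are the two roots in `(0, 1)`.
-/

open Polynomial

/-- The Do–Schmidt polynomial `P_k(x) = x³ − (2k+4)x² + (k+4)x − 1`. -/
noncomputable def Pk (k : ℕ) : Polynomial ℚ :=
  X ^ 3 - C ((2 * k + 4 : ℕ) : ℚ) * X ^ 2 + C ((k + 4 : ℕ) : ℚ) * X - C 1

open Set

namespace Polynomial

theorem mem_of_aeval_eq_zero_of_natDegree_le_card {K L : Type*} [Field K] [Field L] [Algebra K L]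
    {p : K[X]} (hp : p ≠ 0) {s : Finset L} (hs : p.natDegree ≤ s.card)
    (hroots : ∀ x ∈ s, aeval x p = 0) {z : L} (hz : aeval z p = 0) : z ∈ s := by
  classical
  set q := p.map (algebraMap K L)
  have hq : q ≠ 0 := map_ne_zero hp
  have hmem_roots : ∀ x, aeval x p = 0 → x ∈ q.roots.toFinset := fun x hx => by
    rwa [Multiset.mem_toFinset, mem_roots hq, IsRoot, eval_map_algebraMap]
  by_contra hzs
  have : s.card + 1 ≤ q.natDegree := calc
    s.card + 1 = (insert z s).card := (Finset.card_insert_of_notMem hzs).symm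
    _ ≤ q.roots.toFinset.card :=
      Finset.card_le_card <|
        Finset.insert_subset (hmem_roots z hz) fun x hx => hmem_roots x (hroots x hx)
    _ ≤ q.roots.card := Multiset.toFinset_card_le _
    _ ≤ q.natDegree := card_roots' q
  rw [natDegree_map] at this
  omega

theorem exists_mem_Ioo_aeval_eq_zero {R : Type*} [CommSemiring R] [Algebra R ℝ] (p : R[X])
    {a b : ℝ} (hab : a ≤ b) (hsign : aeval a p * aeval b p < 0) :
    ∃ x ∈ Ioo a b, aeval x p = 0 := by
  have hcont := (p.continuous_aeval (A := ℝ)).continuousOn (s := Icc a b)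
  rcases mul_neg_iff.mp hsign with ⟨ha, hb⟩ | ⟨ha, hb⟩
  · exact intermediate_value_Ioo' hab hcont ⟨hb, ha⟩
  · exact intermediate_value_Ioo hab hcont ⟨ha, hb⟩

theorem Monic.irreducible_map_rat_of_natDegree_le_three {p : ℤ[X]} (hp : p.Monic)
    (h2 : 2 ≤ p.natDegree) (h3 : p.natDegree ≤ 3) (hunit : IsUnit (p.coeff 0))
    (hone : p.eval 1 ≠ 0) (hneg : p.eval (-1) ≠ 0) :
    Irreducible (p.map (algebraMap ℤ ℚ)) := by
  have hdeg : (p.map (algebraMap ℤ ℚ)).natDegree = p.natDegree := hp.natDegree_map _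
  rw [(hp.map _).irreducible_iff_roots_eq_zero_of_degree_le_three (by rwa [hdeg]) (by rwa [hdeg]),
    Multiset.eq_zero_iff_forall_notMem]
  intro x hx
  rw [mem_roots (hp.map _).ne_zero, IsRoot, eval_map_algebraMap] at hx
  obtain ⟨n, rfl, hn⟩ := exists_integer_of_is_root_of_monic hp hx
  have hn : n = 1 ∨ n = -1 := Int.isUnit_iff.mp (isUnit_of_dvd_unit hn hunit)
  rw [aeval_algebraMap_apply, aeval_def, Algebra.algebraMap_self, eval₂_id,
    map_eq_zero_iff _ (algebraMap ℤ ℚ).injective_int] at hx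
  rcases hn with rfl | rfl <;> contradiction

end Polynomial

noncomputable def PkInt (k : ℕ) : ℤ[X] :=
  X ^ 3 - C ((2 * k + 4 : ℕ) : ℤ) * X ^ 2 + C ((k + 4 : ℕ) : ℤ) * X - C 1

theorem PkInt_map (k : ℕ) : (PkInt k).map (algebraMap ℤ ℚ) = Pk k := by
  simp only [PkInt, Pk, Polynomial.map_sub, Polynomial.map_add, Polynomial.map_mul,
    Polynomial.map_pow, map_X, map_natCast, Polynomial.map_natCast, map_one, Polynomial.map_one]

theorem PkInt_monic (k : ℕ) : (PkInt k).Monic := by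
  unfold PkInt; monicity!

theorem PkInt_natDegree (k : ℕ) : (PkInt k).natDegree = 3 := by
  unfold PkInt; compute_degree!

theorem Pk_monic (k : ℕ) : (Pk k).Monic :=
  PkInt_map k ▸ (PkInt_monic k).map _

theorem Pk_natDegree (k : ℕ) : (Pk k).natDegree = 3 := by
  rw [← PkInt_map, (PkInt_monic k).natDegree_map, PkInt_natDegree]

theorem aeval_Pk (k : ℕ) {A : Type*} [CommRing A] [Algebra ℚ A] (x : A) :
    aeval x (Pk k) = x ^ 3 - (2 * k + 4) * x ^ 2 + (k + 4) * x - 1 := by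
  simp only [Pk, map_sub, map_add, map_mul, aeval_X_pow, aeval_X, map_one, map_natCast]
  push_cast
  ring

theorem Pk_irreducible {k : ℕ} (hk : 0 < k) : Irreducible (Pk k) := by
  rw [← PkInt_map]
  refine (PkInt_monic k).irreducible_map_rat_of_natDegree_le_three
    (by rw [PkInt_natDegree]; norm_num) (PkInt_natDegree k).le ?_ ?_ ?_
  · simp [PkInt]
  all_goals
    simp only [PkInt, eval_sub, eval_add, eval_mul, eval_pow, eval_X, eval_C]
    push_cast
    omega

theorem isIntegral_of_aeval_Pk_eq_zero {k : ℕ} {x : ℝ} (hx : aeval x (Pk k) = 0) :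
    IsIntegral ℤ x :=
  ⟨PkInt k, PkInt_monic k, by rwa [← aeval_def, ← aeval_map_algebraMap ℚ, PkInt_map]⟩

theorem minpoly_eq_Pk {k : ℕ} (hk : 0 < k) {x : ℝ} (hx : aeval x (Pk k) = 0) :
    minpoly ℚ x = Pk k :=
  (minpoly.eq_of_irreducible_of_monic (Pk_irreducible hk) hx (Pk_monic k)).symm

theorem aeval_ofReal_Pk (k : ℕ) (x : ℝ) : aeval (x : ℂ) (Pk k) = aeval x (Pk k) := by
  simp [aeval_Pk]

theorem Pk_roots_classification {k : ℕ} (hk : 0 < k) :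
    ∃ β : ℝ, 1 < β ∧ aeval β (Pk k) = 0 ∧
      ∀ z : ℂ, aeval z (Pk k) = 0 → z = β ∨ ∃ r : ℝ, z = r ∧ 0 < r ∧ r < 1 := by
  have hk₁ : (1 : ℝ) ≤ k := by exact_mod_cast hk
  obtain ⟨r₁, ⟨hr₁0, hr₁⟩, hroot₁⟩ := (Pk k).exists_mem_Ioo_aeval_eq_zero
    (a := 0) (b := 1 / 2) (by norm_num) (by simp only [aeval_Pk]; nlinarith)
  obtain ⟨r₂, ⟨hr₂, hr₂1⟩, hroot₂⟩ := (Pk k).exists_mem_Ioo_aeval_eq_zero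
    (a := 1 / 2) (b := 1) (by norm_num) (by simp only [aeval_Pk]; nlinarith)
  obtain ⟨β, ⟨hβ, -⟩, hrootβ⟩ := (Pk k).exists_mem_Ioo_aeval_eq_zero
    (a := 1) (b := 2 * k + 4) (by linarith) (by simp only [aeval_Pk]; nlinarith)
  refine ⟨β, hβ, hrootβ, fun z hz => ?_⟩
  have hcard : ({(r₁ : ℂ), (r₂ : ℂ), (β : ℂ)} : Finset ℂ).card = 3 := by
    rw [Finset.card_eq_three]
    exact ⟨r₁, r₂, β, by norm_cast; linarith, by norm_cast; linarith, by norm_cast; linarith, rfl⟩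
  have hmem := mem_of_aeval_eq_zero_of_natDegree_le_card (Pk_monic k).ne_zero
    (hcard ▸ (Pk_natDegree k).le) (by simp [aeval_ofReal_Pk, hroot₁, hroot₂, hrootβ]) hz
  simp only [Finset.mem_insert, Finset.mem_singleton] at hmem
  rcases hmem with rfl | rfl | rfl
  · exact Or.inr ⟨r₁, rfl, hr₁0, by linarith⟩
  · exact Or.inr ⟨r₂, rfl, by linarith, hr₂1⟩
  · exact Or.inl rfl

theorem stmt_15 (k : ℕ) (hk : 2 ≤ k) :
    Irreducible (Pk k) ∧
    (∀ z : ℂ, aeval z (Pk k) = 0 → z.im = 0) ∧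
    ∃ β : ℝ, aeval β (Pk k) = 0 ∧ 1 < β ∧
      (∀ γ : ℝ, aeval γ (Pk k) = 0 → 1 < γ → γ = β) ∧
      (∀ z : ℂ, aeval z (Pk k) = 0 → z ≠ (β : ℂ) → ‖z‖ < 1) ∧
      IsPisot β ∧ (minpoly ℚ β).natDegree = 3 := by
  have hk₀ : 0 < k := by omega
  obtain ⟨β, hβ, hroot, hroots⟩ := Pk_roots_classification hk₀
  have hconj : ∀ z : ℂ, aeval z (Pk k) = 0 → z ≠ (β : ℂ) → ‖z‖ < 1 := fun z hz hzβ => by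
    obtain ⟨r, rfl, hr0, hr1⟩ := (hroots z hz).resolve_left hzβ
    rwa [Complex.norm_real, Real.norm_of_nonneg hr0.le]
  have hmin := minpoly_eq_Pk hk₀ hroot
  refine ⟨Pk_irreducible hk₀, fun z hz => ?_, β, hroot, hβ, fun γ hγ hγ1 => ?_, hconj,
    ⟨hβ, isIntegral_of_aeval_Pk_eq_zero hroot, fun z hzβ hz => hconj z (hmin ▸ hz) hzβ⟩,
    hmin ▸ Pk_natDegree k⟩
  · rcases hroots z hz with rfl | ⟨r, rfl, -⟩ <;> exact Complex.ofReal_im _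
  · have hγ : aeval (γ : ℂ) (Pk k) = 0 := by rw [aeval_ofReal_Pk, hγ, Complex.ofReal_zero]
    rcases hroots γ hγ with h | ⟨r, h, -, hr1⟩
    · exact_mod_cast h
    · have : γ = r := by exact_mod_cast h
      linarith
end

section
/- Let d ≥ 1 and let p(x) = x^d + a_{d−1}x^{d−1} + ⋯ + a₁x + a₀ ∈ ℤ[x] be monic and irreducible over ℚ, with a root β ∈ ℂ. Let A_p be the companion-type matrix of p: the d × d integer matrix whose last column is (−a₀, −a₁, …, −a_{d−1})ᵀ, with entries 1 in positions (i+1, i) for 1 ≤ i ≤ d−1 and 0 elsewhere. Let A be a d × d integer matrix having β as an eigenvalue over ℂ, and let w ∈ ℤ^d be a nonzero vector. Then there is a unique d × d integer matrix C satisfying C·A_p = A·C and C·e₁ = w (where e₁ is the first standard basis vector); its columns are w, Aw, A²w, …, A^{d−1}w, and det C ≠ 0. -/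
open Matrix Polynomial

private lemma aux_charpoly_root {d : ℕ} (A : Matrix (Fin d) (Fin d) ℤ) (β : ℂ)
    (hA : ∃ u : Fin d → ℂ, u ≠ 0 ∧ (A.map (Int.cast : ℤ → ℂ)).mulVec u = β • u) :
    Polynomial.aeval β A.charpoly = 0 := by
  obtain ⟨u, hu, huv⟩ := hA
  set B := A.map (Int.cast : ℤ → ℂ) with hB
  have hdet : (β • (1 : Matrix (Fin d) (Fin d) ℂ) - B).det = 0 := by
    rw [← Matrix.exists_mulVec_eq_zero_iff]
    refine ⟨u, hu, ?_⟩
    rw [Matrix.sub_mulVec, Matrix.smul_mulVec, Matrix.one_mulVec, huv, sub_self]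
  have h1 : B.charpoly.eval β = (β • (1 : Matrix (Fin d) (Fin d) ℂ) - B).det := by
    rw [Matrix.charpoly, ← Polynomial.coe_evalRingHom, RingHom.map_det]
    congr 1
    ext i j
    by_cases h : i = j
    · subst h
      simp [Matrix.charmatrix_apply_eq, Matrix.smul_apply, Matrix.one_apply, Matrix.sub_apply]
    · simp [Matrix.charmatrix_apply_ne _ _ _ h, Matrix.smul_apply, Matrix.one_apply_ne h,
        Matrix.sub_apply]
  have h2 : B.charpoly = A.charpoly.map (Int.castRingHom ℂ) := by
    rw [hB]
    exact Matrix.charpoly_map A (Int.castRingHom ℂ)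
  rw [Polynomial.aeval_def, ← Polynomial.eval_map]
  have : (algebraMap ℤ ℂ) = Int.castRingHom ℂ := by ext; simp
  rw [this, ← h2, h1, hdet]

private lemma aux_p_eq_charpoly {d : ℕ} (hd : 0 < d)
    (p : Polynomial ℤ) (hmonic : p.Monic) (hdeg : p.natDegree = d)
    (hirr : Irreducible (p.map (Int.castRingHom ℚ)))
    (β : ℂ) (hβ : Polynomial.aeval β p = 0)
    (A : Matrix (Fin d) (Fin d) ℤ)
    (hroot : Polynomial.aeval β A.charpoly = 0) :
    p = A.charpoly := by
  have hcast : (Int.castRingHom ℚ) = algebraMap ℤ ℚ := by ext; simp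
  set pq := p.map (Int.castRingHom ℚ) with hpq
  set cq := A.charpoly.map (Int.castRingHom ℚ) with hcq
  have hpqmonic : pq.Monic := hmonic.map _
  have hcqmonic : cq.Monic := (Matrix.charpoly_monic A).map _
  have haevalpq : Polynomial.aeval β pq = 0 := by
    rw [hpq, hcast, Polynomial.aeval_map_algebraMap, hβ]
  have haevalcq : Polynomial.aeval β cq = 0 := by
    rw [hcq, hcast, Polynomial.aeval_map_algebraMap, hroot]
  have hmin : minpoly ℚ β = pq := (minpoly.eq_of_irreducible_of_monic hirr haevalpq hpqmonic).symm
  have hdvd : pq ∣ cq := hmin ▸ minpoly.dvd ℚ β haevalcq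
  have hdegpq : pq.natDegree = d := by
    rw [hpq, Polynomial.natDegree_map_eq_of_injective (Int.cast_injective), hdeg]
  have hdegcq : cq.natDegree = d := by
    rw [hcq, Polynomial.natDegree_map_eq_of_injective (Int.cast_injective),
      Matrix.charpoly_natDegree_eq_dim, Fintype.card_fin]
  obtain ⟨c, hc⟩ := hdvd
  have hcmonic : c.Monic := hpqmonic.of_mul_monic_left (hc ▸ hcqmonic)
  have hcdeg : c.natDegree = 0 := by
    have h := congrArg Polynomial.natDegree hc
    rw [hdegcq, Polynomial.Monic.natDegree_mul hpqmonic hcmonic, hdegpq] at h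
    omega
  have hc1 : c = 1 := Polynomial.eq_one_of_monic_natDegree_zero hcmonic hcdeg
  have : pq = cq := by rw [hc, hc1, mul_one]
  have hinj : Function.Injective (Polynomial.map (Int.castRingHom ℚ)) :=
    Polynomial.map_injective _ Int.cast_injective
  exact hinj this

theorem stmt_19
    (d : ℕ) (hd : 0 < d)
    (p : Polynomial ℤ) (hmonic : p.Monic) (hdeg : p.natDegree = d)
    (hirr : Irreducible (p.map (Int.castRingHom ℚ)))
    (β : ℂ) (hβ : Polynomial.aeval β p = 0)
    -- the companion-type matrix of p
    (Ap : Matrix (Fin d) (Fin d) ℤ)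
    (hAp : ∀ i j : Fin d, Ap i j =
      if (j : ℕ) = d - 1 then -(p.coeff i) else if (i : ℕ) = (j : ℕ) + 1 then 1 else 0)
    -- an integer matrix with eigenvalue β over ℂ
    (A : Matrix (Fin d) (Fin d) ℤ)
    (hA : ∃ u : Fin d → ℂ, u ≠ 0 ∧ (A.map (Int.cast : ℤ → ℂ)).mulVec u = β • u)
    (w : Fin d → ℤ) (hw : w ≠ 0) :
    (∃! C : Matrix (Fin d) (Fin d) ℤ,
        C * Ap = A * C ∧ C.mulVec (Pi.single (⟨0, hd⟩ : Fin d) 1) = w) ∧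
    ∀ C : Matrix (Fin d) (Fin d) ℤ,
      C * Ap = A * C → C.mulVec (Pi.single (⟨0, hd⟩ : Fin d) 1) = w →
        (∀ j : Fin d, (fun i => C i j) = (A ^ (j : ℕ)).mulVec w) ∧ C.det ≠ 0 := by
  have hpc : p = A.charpoly := aux_p_eq_charpoly hd p hmonic hdeg hirr β hβ A
    (aux_charpoly_root A β hA)
  have hCH : Polynomial.aeval A p = 0 := by rw [hpc]; exact Matrix.aeval_self_charpoly A
  -- the sum identity  ∑ k < d, p.coeff k • A^k = -(A^d)
  have hsum : ∑ k : Fin d, p.coeff (k : ℕ) • A ^ (k : ℕ) = -(A ^ d) := by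
    have h2 : p.coeff d = 1 := by
      have := hmonic.coeff_natDegree
      rwa [hdeg] at this
    have h1 := Polynomial.aeval_eq_sum_range (p := p) A
    rw [hCH, hdeg, Finset.sum_range_succ, h2, one_smul] at h1
    rw [Fin.sum_univ_eq_sum_range (fun k => p.coeff k • A ^ k) d]
    exact eq_neg_of_add_eq_zero_left h1.symm
  -- pointwise evaluation against w
  have hvec : (A ^ d) *ᵥ w = ∑ k : Fin d, (-(p.coeff (k : ℕ))) • ((A ^ (k : ℕ)) *ᵥ w) := by
    have hA' : A ^ d = ∑ k : Fin d, (-(p.coeff (k : ℕ))) • A ^ (k : ℕ) := by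
      simp only [neg_smul]
      rw [Finset.sum_neg_distrib, hsum, neg_neg]
    rw [hA']
    have hms := map_sum (AddMonoidHom.mk' (fun M : Matrix (Fin d) (Fin d) ℤ => M *ᵥ w)
        (fun M N => Matrix.add_mulVec M N w))
        (fun k : Fin d => (-(p.coeff (k : ℕ))) • A ^ (k : ℕ)) Finset.univ
    refine hms.trans ?_
    refine Finset.sum_congr rfl fun k _ => ?_
    show ((-(p.coeff (k : ℕ))) • A ^ (k : ℕ)) *ᵥ w = (-(p.coeff (k : ℕ))) • (A ^ (k : ℕ) *ᵥ w)
    exact Matrix.smul_mulVec _ _ _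
  -- the canonical matrix
  set C0 : Matrix (Fin d) (Fin d) ℤ := Matrix.of (fun i j => ((A ^ (j : ℕ)) *ᵥ w) i) with hC0
  have hC0comm : C0 * Ap = A * C0 := by
    ext i j
    rw [Matrix.mul_apply, Matrix.mul_apply]
    by_cases hj : (j : ℕ) = d - 1
    · have h1 : ∑ k, C0 i k * Ap k j = ∑ k : Fin d, (-(p.coeff (k : ℕ))) * ((A ^ (k : ℕ)) *ᵥ w) i := by
        refine Finset.sum_congr rfl fun k _ => ?_
        rw [hAp, if_pos hj, hC0]
        simp only [Matrix.of_apply]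
        ring
      have h2 : ∑ k, A i k * C0 k j = ((A ^ d) *ᵥ w) i := by
        have hAd : A * A ^ (j : ℕ) = A ^ d := by
          rw [← pow_succ']
          congr 1
          have := j.isLt
          omega
        calc ∑ k, A i k * C0 k j = (A *ᵥ ((A ^ (j : ℕ)) *ᵥ w)) i := by
              simp [hC0, Matrix.mulVec, dotProduct]
          _ = ((A * A ^ (j : ℕ)) *ᵥ w) i := by rw [Matrix.mulVec_mulVec]
          _ = ((A ^ d) *ᵥ w) i := by rw [hAd]
      rw [h1, h2, congrFun hvec i]
      simp [Finset.sum_apply]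
    · have hj1 : (j : ℕ) + 1 < d := by
        have := j.isLt
        omega
      have h1 : ∑ k, C0 i k * Ap k j = C0 i ⟨(j : ℕ) + 1, hj1⟩ := by
        rw [Finset.sum_eq_single (⟨(j : ℕ) + 1, hj1⟩ : Fin d)]
        · rw [hAp]
          simp only [Fin.val_mk]
          rw [if_neg (by omega)]
          simp
        · intro k _ hk
          rw [hAp]
          rw [if_neg (by omega), if_neg (fun hkeq => hk (Fin.ext hkeq)), mul_zero]
        · intro hmem
          exact absurd (Finset.mem_univ _) hmem
      have h2 : ∑ k, A i k * C0 k j = C0 i ⟨(j : ℕ) + 1, hj1⟩ := by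
        calc ∑ k, A i k * C0 k j = (A *ᵥ ((A ^ (j : ℕ)) *ᵥ w)) i := by
              simp [hC0, Matrix.mulVec, dotProduct]
          _ = ((A * A ^ (j : ℕ)) *ᵥ w) i := by rw [Matrix.mulVec_mulVec]
          _ = ((A ^ ((j : ℕ) + 1)) *ᵥ w) i := by rw [← pow_succ']
          _ = C0 i ⟨(j : ℕ) + 1, hj1⟩ := rfl
      rw [h1, h2]
  have hC0e : C0 *ᵥ (Pi.single (⟨0, hd⟩ : Fin d) 1) = w := by
    funext i
    simp [hC0, Matrix.mulVec_single]
  -- key: columns are determined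
  have key : ∀ C : Matrix (Fin d) (Fin d) ℤ,
      C * Ap = A * C → C *ᵥ (Pi.single (⟨0, hd⟩ : Fin d) 1) = w →
      ∀ j : Fin d, (fun i => C i j) = (A ^ (j : ℕ)) *ᵥ w := by
    intro C hc1 hc2 j
    obtain ⟨n, hn⟩ := j
    induction n with
    | zero =>
      funext i
      have := congrFun hc2 i
      simpa using this
    | succ n ih =>
      have hn' : n < d := Nat.lt_of_succ_lt hn
      have hcol := ih hn'
      funext i
      have h := congrFun (congrFun hc1 i) ⟨n, hn'⟩
      rw [Matrix.mul_apply, Matrix.mul_apply] at h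
      have hnd : ¬ (n = d - 1) := by omega
      have hlhs : ∑ k, C i k * Ap k ⟨n, hn'⟩ = C i ⟨n + 1, hn⟩ := by
        rw [Finset.sum_eq_single (⟨n + 1, hn⟩ : Fin d)]
        · rw [hAp]
          simp only [Fin.val_mk]
          rw [if_neg hnd]
          simp
        · intro k _ hk
          rw [hAp]
          simp only [Fin.val_mk]
          rw [if_neg hnd, if_neg (fun hkeq => hk (Fin.ext hkeq)), mul_zero]
        · intro hmem
          exact absurd (Finset.mem_univ _) hmem
      have hrhs : ∑ k, A i k * C k ⟨n, hn'⟩ = ((A ^ (n + 1)) *ᵥ w) i := by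
        have hck : ∀ k, C k ⟨n, hn'⟩ = ((A ^ n) *ᵥ w) k := fun k => congrFun hcol k
        simp_rw [hck]
        calc ∑ k, A i k * ((A ^ n) *ᵥ w) k = (A *ᵥ ((A ^ n) *ᵥ w)) i := by
              simp [Matrix.mulVec, dotProduct]
          _ = ((A * A ^ n) *ᵥ w) i := by rw [Matrix.mulVec_mulVec]
          _ = ((A ^ (n + 1)) *ᵥ w) i := by rw [← pow_succ']
      rw [hlhs, hrhs] at h
      exact h
  -- det ≠ 0
  have hdet : C0.det ≠ 0 := by
    intro h0
    set B : Matrix (Fin d) (Fin d) ℚ := A.map (Int.cast : ℤ → ℚ) with hB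
    set wq : Fin d → ℚ := fun i => ((w i : ℚ)) with hwqdef
    have hBpow : ∀ n : ℕ, B ^ n = (A ^ n).map (Int.cast : ℤ → ℚ) := by
      intro n
      have h := map_pow ((Int.castRingHom ℚ).mapMatrix) A n
      simpa [RingHom.mapMatrix_apply, hB] using h.symm
    set F : Matrix (Fin d) (Fin d) ℚ := C0.map (Int.cast : ℤ → ℚ) with hF
    have hFdet : F.det = 0 := by
      have hmd := (RingHom.map_det (Int.castRingHom ℚ) C0).symm
      rw [RingHom.mapMatrix_apply, Int.coe_castRingHom] at hmd
      rw [hF, hmd, h0]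
      simp
    obtain ⟨v, hv, hFv⟩ := Matrix.exists_mulVec_eq_zero_iff.mpr hFdet
    have hFcol : ∀ i j : Fin d, F i j = ((B ^ (j : ℕ)) *ᵥ wq) i := by
      intro i j
      simp only [hF, Matrix.map_apply, hC0, Matrix.of_apply, hBpow, Matrix.mulVec,
        dotProduct, hwqdef]
      push_cast
      rfl
    set q : Polynomial ℚ := ∑ j : Fin d, Polynomial.C (v j) * Polynomial.X ^ (j : ℕ) with hq
    have hqcoeff : ∀ j : Fin d, q.coeff (j : ℕ) = v j := by
      intro j0
      rw [hq, Polynomial.finset_sum_coeff, Finset.sum_eq_single j0]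
      · simp
      · intro k _ hk
        rw [Polynomial.coeff_C_mul, Polynomial.coeff_X_pow,
          if_neg (fun h => hk (Fin.ext h.symm)), mul_zero]
      · simp
    have hqne : q ≠ 0 := by
      obtain ⟨j0, hj0⟩ := Function.ne_iff.mp hv
      intro h
      apply hj0
      have := hqcoeff j0
      rw [h] at this
      simpa using this.symm
    have hqdeg : q.natDegree < d := by
      have hle : q.natDegree ≤ d - 1 :=
        Polynomial.natDegree_sum_le_of_forall_le _ _ (fun j _ =>
          le_trans (Polynomial.natDegree_C_mul_X_pow_le _ _) (by have := j.isLt; omega))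
      omega
    have hdegpq : (p.map (Int.castRingHom ℚ)).natDegree = d := by
      rw [Polynomial.natDegree_map_eq_of_injective Int.cast_injective, hdeg]
    have hndvd : ¬ (p.map (Int.castRingHom ℚ)) ∣ q := by
      intro hdvd
      have := Polynomial.natDegree_le_of_dvd hdvd hqne
      omega
    obtain ⟨a, b, hab⟩ := (hirr.coprime_iff_not_dvd).mpr hndvd
    have hpB : Polynomial.aeval B (p.map (Int.castRingHom ℚ)) = 0 := by
      have hcast : (Int.castRingHom ℚ) = algebraMap ℤ ℚ := by ext; simp
      rw [hcast, Polynomial.aeval_map_algebraMap]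
      calc Polynomial.aeval B p
          = ((Int.castRingHom ℚ).mapMatrix.toIntAlgHom :
              Matrix (Fin d) (Fin d) ℤ →ₐ[ℤ] Matrix (Fin d) (Fin d) ℚ) (Polynomial.aeval A p) := by
            rw [← Polynomial.aeval_algHom_apply]
            congr 1
        _ = 0 := by rw [hCH]; simp
    have hqB : Polynomial.aeval B q = ∑ j : Fin d, v j • B ^ (j : ℕ) := by
      rw [hq, map_sum]
      refine Finset.sum_congr rfl fun j _ => ?_
      rw [_root_.map_mul, Polynomial.aeval_C, map_pow, Polynomial.aeval_X, ← Algebra.smul_def]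
    have hq0 : (Polynomial.aeval B q) *ᵥ wq = 0 := by
      rw [hqB]
      have hsv : (∑ j : Fin d, v j • B ^ (j : ℕ)) *ᵥ wq
          = ∑ j : Fin d, v j • ((B ^ (j : ℕ)) *ᵥ wq) := by
        refine (map_sum (AddMonoidHom.mk' (fun M : Matrix (Fin d) (Fin d) ℚ => M *ᵥ wq)
          (fun M N => Matrix.add_mulVec M N wq)) _ Finset.univ).trans ?_
        refine Finset.sum_congr rfl fun j _ => ?_
        show (v j • B ^ (j : ℕ)) *ᵥ wq = v j • (B ^ (j : ℕ) *ᵥ wq)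
        exact Matrix.smul_mulVec _ _ _
      rw [hsv]
      funext i
      have h2 : ∑ j : Fin d, F i j * v j = 0 := congrFun hFv i
      simp only [hFcol] at h2
      simpa [Finset.sum_apply, mul_comm] using h2
    have hwq0 : wq = 0 := by
      have h1 : (Polynomial.aeval B (a * (p.map (Int.castRingHom ℚ)) + b * q)) *ᵥ wq = wq := by
        rw [hab]
        simp
      rw [map_add, _root_.map_mul, _root_.map_mul, hpB, mul_zero, zero_add,
        ← Matrix.mulVec_mulVec, hq0, Matrix.mulVec_zero] at h1
      exact h1.symm
    apply hw
    funext i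
    have := congrFun hwq0 i
    simp only [hwqdef, Pi.zero_apply] at this
    exact_mod_cast this
  constructor
  · refine ⟨C0, ⟨hC0comm, hC0e⟩, ?_⟩
    intro C ⟨hc1, hc2⟩
    ext i j
    exact congrFun (key C hc1 hc2 j) i
  · intro C hc1 hc2
    have hcols := key C hc1 hc2
    have hCeq : C = C0 := by
      ext i j
      exact congrFun (hcols j) i
    exact ⟨hcols, hCeq ▸ hdet⟩
end
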